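/- arXiv:2507.20151 — 2 statements merged into one kernel-verified Lean document; each statement's English description precedes it below -/
import Mathlib

section
/- Let r ≥ 1 be an integer and X a nonzero complex number. Then the limit as X' → X of [(Σ_{a+b=r-1, a,b≥0} X^a X'^b)² − r² X^{r-1} X'^{r-1}] / [(Σ_{a+b=r-1} X^a X'^b)² · (X − X')²] equals (r² − 1)/(12 X²). -/
open Filter

namespace BergmanAnomalyAux

/-- partial geometric kernel `∑_{a<r} X^a Y^(r-1-a)`. -/
noncomputable def Sf (r : ℕ) (X Y : ℂ) : ℂ := ∑ a ∈ Finset.range r, X ^ a * Y ^ (r - 1 - a)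

/-- `κ r a b = |a + b - (r-1)|` (in truncated ℕ arithmetic). -/
def κ (r a b : ℕ) : ℕ := (a + b - (r - 1)) + ((r - 1) - (a + b))

/-- the regular part `G` with `2·(S² - r² X^{r-1} Y^{r-1}) = (X-Y)²·G`. -/
noncomputable def Gf (r : ℕ) (X Y : ℂ) : ℂ :=
  ∑ a ∈ Finset.range r, ∑ b ∈ Finset.range r,
    (X * Y) ^ (r - 1 - κ r a b) * (Sf (κ r a b) X Y) ^ 2

lemma sum_quad (n : ℕ) (p q u : ℂ) :
    ∑ a ∈ Finset.range n, (p * (a : ℂ) ^ 2 + q * (a : ℂ) + u)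
      = p * ((n : ℂ) * ((n : ℂ) - 1) * (2 * (n : ℂ) - 1) / 6)
        + q * ((n : ℂ) * ((n : ℂ) - 1) / 2) + (n : ℂ) * u := by
  induction n with
  | zero => simp
  | succ n ih => rw [Finset.sum_range_succ, ih]; push_cast; ring

lemma sum_kappa_sq (r : ℕ) (hr : 1 ≤ r) :
    ∑ a ∈ Finset.range r, ∑ b ∈ Finset.range r, ((κ r a b : ℂ)) ^ 2
      = (r : ℂ) ^ 2 * ((r : ℂ) ^ 2 - 1) / 6 := by
  have hc : ((r - 1 : ℕ) : ℂ) = (r : ℂ) - 1 := by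
    rw [Nat.cast_sub hr]; norm_num
  have step : ∀ a ∈ Finset.range r,
      ∑ b ∈ Finset.range r, ((κ r a b : ℂ)) ^ 2
        = (r : ℂ) * ((a : ℂ) - ((r : ℂ) - 1)) ^ 2
          + ((r : ℂ) * ((r : ℂ) - 1)) * ((a : ℂ) - ((r : ℂ) - 1))
          + (r : ℂ) * ((r : ℂ) - 1) * (2 * (r : ℂ) - 1) / 6 := by
    intro a _
    have h1 : ∑ b ∈ Finset.range r, ((κ r a b : ℂ)) ^ 2
        = ∑ b ∈ Finset.range r,
            ((1 : ℂ) * (b : ℂ) ^ 2 + (2 * ((a : ℂ) - ((r : ℂ) - 1))) * (b : ℂ)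
              + ((a : ℂ) - ((r : ℂ) - 1)) ^ 2) := by
      refine Finset.sum_congr rfl fun b _ => ?_
      have hca : ((κ r a b : ℂ)) ^ 2 = ((a : ℂ) + (b : ℂ) - ((r : ℂ) - 1)) ^ 2 := by
        rcases le_total (a + b) (r - 1) with h | h
        · have hk : κ r a b = (r - 1) - (a + b) := by unfold κ; omega
          rw [hk, Nat.cast_sub h, Nat.cast_add, hc]; ring
        · have hk : κ r a b = (a + b) - (r - 1) := by unfold κ; omega
          rw [hk, Nat.cast_sub h, Nat.cast_add, hc]
      rw [hca]; ring
    rw [h1, sum_quad]; ring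
  rw [Finset.sum_congr rfl step]
  have h2 : ∑ a ∈ Finset.range r,
      ((r : ℂ) * ((a : ℂ) - ((r : ℂ) - 1)) ^ 2
        + ((r : ℂ) * ((r : ℂ) - 1)) * ((a : ℂ) - ((r : ℂ) - 1))
        + (r : ℂ) * ((r : ℂ) - 1) * (2 * (r : ℂ) - 1) / 6)
      = ∑ a ∈ Finset.range r,
          ((r : ℂ) * (a : ℂ) ^ 2
            + ((r : ℂ) * ((r : ℂ) - 1) - 2 * (r : ℂ) * ((r : ℂ) - 1)) * (a : ℂ)
            + ((r : ℂ) * ((r : ℂ) - 1) ^ 2 - (r : ℂ) * ((r : ℂ) - 1) * ((r : ℂ) - 1)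
              + (r : ℂ) * ((r : ℂ) - 1) * (2 * (r : ℂ) - 1) / 6)) :=
    Finset.sum_congr rfl fun a _ => by ring
  rw [h2, sum_quad]; ring

lemma Sf_diag (k : ℕ) (X : ℂ) : Sf k X X = (k : ℂ) * X ^ (k - 1) := by
  unfold Sf
  have h : ∀ i ∈ Finset.range k, X ^ i * X ^ (k - 1 - i) = X ^ (k - 1) := by
    intro i hi
    rw [← pow_add]
    congr 1
    have := Finset.mem_range.mp hi
    omega
  rw [Finset.sum_congr rfl h, Finset.sum_const, Finset.card_range, nsmul_eq_mul]

lemma core (X Y : ℂ) (k m : ℕ) :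
    X ^ m * Y ^ (m + k * 2) + X ^ (m + k * 2) * Y ^ m - 2 * (X ^ (m + k) * Y ^ (m + k))
      = (X - Y) ^ 2 * ((X * Y) ^ m * (Sf k X Y) ^ 2) := by
  have hg : Sf k X Y * (X - Y) = X ^ k - Y ^ k := geom_sum₂_mul X Y k
  rw [pow_add, pow_add, pow_add, pow_add, pow_mul, pow_mul, mul_pow]
  linear_combination (-(X ^ m * Y ^ m) * (X ^ k - Y ^ k + (X - Y) * Sf k X Y)) * hg

lemma perterm (r : ℕ) (hr : 1 ≤ r) (X Y : ℂ) {a b : ℕ} (ha : a < r) (hb : b < r) :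
    (X ^ a * Y ^ (r - 1 - a) * (X ^ b * Y ^ (r - 1 - b)) - X ^ (r - 1) * Y ^ (r - 1))
      + (X ^ (r - 1 - a) * Y ^ (r - 1 - (r - 1 - a))
          * (X ^ (r - 1 - b) * Y ^ (r - 1 - (r - 1 - b))) - X ^ (r - 1) * Y ^ (r - 1))
      = (X - Y) ^ 2 * ((X * Y) ^ (r - 1 - κ r a b) * (Sf (κ r a b) X Y) ^ 2) := by
  have comb : ∀ p q p' q' : ℕ,
      X ^ p * Y ^ q * (X ^ p' * Y ^ q') = X ^ (p + p') * Y ^ (q + q') := by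
    intro p q p' q'; rw [pow_add, pow_add]; ring
  rw [comb, comb]
  rcases le_total (a + b) (r - 1) with h | h
  · have hk : κ r a b = (r - 1) - (a + b) := by unfold κ; omega
    rw [hk]
    have E1 : Y ^ ((r - 1 - a) + (r - 1 - b)) = Y ^ ((a + b) + (r - 1 - (a + b)) * 2) := by
      congr 1; omega
    have E2 : X ^ ((r - 1 - a) + (r - 1 - b)) = X ^ ((a + b) + (r - 1 - (a + b)) * 2) := by
      congr 1; omega
    have E3 : Y ^ ((r - 1 - (r - 1 - a)) + (r - 1 - (r - 1 - b))) = Y ^ (a + b) := by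
      congr 1; omega
    have E4 : X ^ (r - 1) = X ^ ((a + b) + (r - 1 - (a + b))) := by congr 1; omega
    have E5 : Y ^ (r - 1) = Y ^ ((a + b) + (r - 1 - (a + b))) := by congr 1; omega
    have E6 : (X * Y) ^ (r - 1 - (r - 1 - (a + b))) = (X * Y) ^ (a + b) := by congr 1; omega
    rw [E1, E2, E3, E4, E5, E6]
    linear_combination core X Y (r - 1 - (a + b)) (a + b)
  · have hk : κ r a b = (a + b) - (r - 1) := by unfold κ; omega
    rw [hk]
    have E1 : X ^ (a + b)
        = X ^ (((r - 1 - a) + (r - 1 - b)) + ((a + b) - (r - 1)) * 2) := by congr 1; omega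
    have E2 : Y ^ ((r - 1 - (r - 1 - a)) + (r - 1 - (r - 1 - b)))
        = Y ^ (((r - 1 - a) + (r - 1 - b)) + ((a + b) - (r - 1)) * 2) := by congr 1; omega
    have E4 : X ^ (r - 1) = X ^ (((r - 1 - a) + (r - 1 - b)) + ((a + b) - (r - 1))) := by
      congr 1; omega
    have E5 : Y ^ (r - 1) = Y ^ (((r - 1 - a) + (r - 1 - b)) + ((a + b) - (r - 1))) := by
      congr 1; omega
    have E6 : (X * Y) ^ (r - 1 - ((a + b) - (r - 1)))
        = (X * Y) ^ ((r - 1 - a) + (r - 1 - b)) := by congr 1; omega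
    rw [E1, E2, E4, E5, E6]
    linear_combination core X Y ((a + b) - (r - 1)) ((r - 1 - a) + (r - 1 - b))

lemma key (r : ℕ) (hr : 1 ≤ r) (X Y : ℂ) :
    2 * ((Sf r X Y) ^ 2 - (r : ℂ) ^ 2 * X ^ (r - 1) * Y ^ (r - 1))
      = (X - Y) ^ 2 * Gf r X Y := by
  have hexp : (Sf r X Y) ^ 2 - (r : ℂ) ^ 2 * X ^ (r - 1) * Y ^ (r - 1)
      = ∑ a ∈ Finset.range r, ∑ b ∈ Finset.range r,
          (X ^ a * Y ^ (r - 1 - a) * (X ^ b * Y ^ (r - 1 - b))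
            - X ^ (r - 1) * Y ^ (r - 1)) := by
    unfold Sf
    rw [sq, Finset.sum_mul_sum]
    simp only [Finset.sum_sub_distrib, Finset.sum_const, Finset.card_range, nsmul_eq_mul]
    ring
  have hrefl : ∑ a ∈ Finset.range r, ∑ b ∈ Finset.range r,
        (X ^ a * Y ^ (r - 1 - a) * (X ^ b * Y ^ (r - 1 - b)) - X ^ (r - 1) * Y ^ (r - 1))
      = ∑ a ∈ Finset.range r, ∑ b ∈ Finset.range r,
          (X ^ (r - 1 - a) * Y ^ (r - 1 - (r - 1 - a))
            * (X ^ (r - 1 - b) * Y ^ (r - 1 - (r - 1 - b))) - X ^ (r - 1) * Y ^ (r - 1)) := by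
    refine Eq.symm ?_
    calc ∑ a ∈ Finset.range r, ∑ b ∈ Finset.range r,
          (X ^ (r - 1 - a) * Y ^ (r - 1 - (r - 1 - a))
            * (X ^ (r - 1 - b) * Y ^ (r - 1 - (r - 1 - b))) - X ^ (r - 1) * Y ^ (r - 1))
        = ∑ a ∈ Finset.range r, ∑ b ∈ Finset.range r,
          (X ^ (r - 1 - a) * Y ^ (r - 1 - (r - 1 - a))
            * (X ^ b * Y ^ (r - 1 - b)) - X ^ (r - 1) * Y ^ (r - 1)) :=
          Finset.sum_congr rfl fun a _ => Finset.sum_range_reflect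
            (fun b => X ^ (r - 1 - a) * Y ^ (r - 1 - (r - 1 - a))
              * (X ^ b * Y ^ (r - 1 - b)) - X ^ (r - 1) * Y ^ (r - 1)) r
      _ = ∑ a ∈ Finset.range r, ∑ b ∈ Finset.range r,
          (X ^ a * Y ^ (r - 1 - a) * (X ^ b * Y ^ (r - 1 - b))
            - X ^ (r - 1) * Y ^ (r - 1)) :=
          Finset.sum_range_reflect
            (fun a => ∑ b ∈ Finset.range r,
              (X ^ a * Y ^ (r - 1 - a) * (X ^ b * Y ^ (r - 1 - b))
                - X ^ (r - 1) * Y ^ (r - 1))) r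
  calc 2 * ((Sf r X Y) ^ 2 - (r : ℂ) ^ 2 * X ^ (r - 1) * Y ^ (r - 1))
      = (∑ a ∈ Finset.range r, ∑ b ∈ Finset.range r,
          (X ^ a * Y ^ (r - 1 - a) * (X ^ b * Y ^ (r - 1 - b))
            - X ^ (r - 1) * Y ^ (r - 1)))
        + (∑ a ∈ Finset.range r, ∑ b ∈ Finset.range r,
          (X ^ (r - 1 - a) * Y ^ (r - 1 - (r - 1 - a))
            * (X ^ (r - 1 - b) * Y ^ (r - 1 - (r - 1 - b)))
            - X ^ (r - 1) * Y ^ (r - 1))) := by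
        rw [hexp, ← hrefl]; ring
    _ = ∑ a ∈ Finset.range r, ∑ b ∈ Finset.range r,
          ((X ^ a * Y ^ (r - 1 - a) * (X ^ b * Y ^ (r - 1 - b))
            - X ^ (r - 1) * Y ^ (r - 1))
          + (X ^ (r - 1 - a) * Y ^ (r - 1 - (r - 1 - a))
            * (X ^ (r - 1 - b) * Y ^ (r - 1 - (r - 1 - b)))
            - X ^ (r - 1) * Y ^ (r - 1))) := by
        rw [← Finset.sum_add_distrib]
        exact Finset.sum_congr rfl fun a _ => (Finset.sum_add_distrib).symm
    _ = ∑ a ∈ Finset.range r, ∑ b ∈ Finset.range r,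
          (X - Y) ^ 2 * ((X * Y) ^ (r - 1 - κ r a b) * (Sf (κ r a b) X Y) ^ 2) :=
        Finset.sum_congr rfl fun a ha => Finset.sum_congr rfl fun b hb =>
          perterm r hr X Y (Finset.mem_range.mp ha) (Finset.mem_range.mp hb)
    _ = (X - Y) ^ 2 * Gf r X Y := by
        unfold Gf
        rw [Finset.mul_sum]
        exact Finset.sum_congr rfl fun a _ => (Finset.mul_sum _ _ _).symm

lemma GX (r : ℕ) (hr : 1 ≤ r) (X : ℂ) :
    Gf r X X * (6 * X ^ 2) = ((r : ℂ) ^ 2 - 1) * (r : ℂ) ^ 2 * X ^ (2 * (r - 1)) := by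
  unfold Gf
  rw [Finset.sum_mul]
  have step : ∀ a ∈ Finset.range r,
      (∑ b ∈ Finset.range r, (X * X) ^ (r - 1 - κ r a b) * (Sf (κ r a b) X X) ^ 2) * (6 * X ^ 2)
        = ∑ b ∈ Finset.range r, ((κ r a b : ℂ)) ^ 2 * (6 * X ^ (2 * (r - 1))) := by
    intro a ha
    rw [Finset.sum_mul]
    refine Finset.sum_congr rfl fun b hb => ?_
    have hka := Finset.mem_range.mp ha
    have hkb := Finset.mem_range.mp hb
    have hkle : κ r a b ≤ r - 1 := by unfold κ; omega
    rw [Sf_diag]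
    rcases Nat.eq_zero_or_pos (κ r a b) with h0 | hpos
    · rw [h0]; simp
    · rw [show X * X = X ^ 2 from (pow_two X).symm, ← pow_mul, mul_pow, ← pow_mul]
      rw [show 2 * (r - 1) = 2 * (r - 1 - κ r a b) + ((κ r a b - 1) * 2 + 2) from by omega,
        pow_add, pow_add]
      ring
  rw [Finset.sum_congr rfl step]
  have h2 : ∀ a ∈ Finset.range r,
      ∑ b ∈ Finset.range r, ((κ r a b : ℂ)) ^ 2 * (6 * X ^ (2 * (r - 1)))
        = (∑ b ∈ Finset.range r, ((κ r a b : ℂ)) ^ 2) * (6 * X ^ (2 * (r - 1))) :=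
    fun a _ => (Finset.sum_mul _ _ _).symm
  rw [Finset.sum_congr rfl h2, ← Finset.sum_mul, sum_kappa_sq r hr]
  ring

end BergmanAnomalyAux

open BergmanAnomalyAux in
/-- For `r ≥ 1` and `X ≠ 0`, the limit as `X' → X` of
`[(Σ_{a+b=r-1} X^a X'^b)² − r² X^{r-1} X'^{r-1}] / [(Σ_{a+b=r-1} X^a X'^b)² (X − X')²]`
equals `(r² − 1)/(12 X²)`. -/
theorem tendsto_bergman_diagonal_anomaly (r : ℕ) (hr : 1 ≤ r) (X : ℂ) (hX : X ≠ 0) :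
    Tendsto (fun X' : ℂ =>
      ((∑ a ∈ Finset.range r, X ^ a * X' ^ (r - 1 - a)) ^ 2
          - (r : ℂ) ^ 2 * X ^ (r - 1) * X' ^ (r - 1)) /
        ((∑ a ∈ Finset.range r, X ^ a * X' ^ (r - 1 - a)) ^ 2 * (X - X') ^ 2))
      (nhdsWithin X {X}ᶜ)
      (nhds (((r : ℂ) ^ 2 - 1) / (12 * X ^ 2))) := by
  have hr0 : (r : ℂ) ≠ 0 := Nat.cast_ne_zero.mpr (by omega)
  have hSX : Sf r X X = (r : ℂ) * X ^ (r - 1) := Sf_diag r X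
  have hSX0 : Sf r X X ≠ 0 := by
    rw [hSX]; exact mul_ne_zero hr0 (pow_ne_zero _ hX)
  have hScont : Continuous (fun Y => Sf r X Y) := by
    unfold Sf
    exact continuous_finset_sum _ fun a _ => continuous_const.mul (continuous_pow _)
  have hGcont : Continuous (fun Y => Gf r X Y) := by
    unfold Gf
    refine continuous_finset_sum _ fun a _ => continuous_finset_sum _ fun b _ => ?_
    exact ((continuous_const.mul continuous_id).pow _).mul
      ((continuous_finset_sum _ fun i _ => continuous_const.mul (continuous_pow _)).pow 2)
  have hval : Gf r X X / (2 * (Sf r X X) ^ 2) = ((r : ℂ) ^ 2 - 1) / (12 * X ^ 2) := by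
    have hGXv := GX r hr X
    rw [hSX]
    have h1 : (2 : ℂ) * ((r : ℂ) * X ^ (r - 1)) ^ 2 ≠ 0 :=
      mul_ne_zero two_ne_zero (pow_ne_zero _ (mul_ne_zero hr0 (pow_ne_zero _ hX)))
    have h2 : (12 : ℂ) * X ^ 2 ≠ 0 := mul_ne_zero (by norm_num) (pow_ne_zero _ hX)
    rw [div_eq_div_iff h1 h2]
    have hp : ((X : ℂ) ^ (r - 1)) ^ 2 = X ^ (2 * (r - 1)) := by
      rw [← pow_mul, Nat.mul_comm]
    linear_combination 2 * hGXv - ((r : ℂ) ^ 2 - 1) * 2 * (r : ℂ) ^ 2 * hp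
  have htend : Tendsto (fun Y => Gf r X Y / (2 * (Sf r X Y) ^ 2))
      (nhdsWithin X {X}ᶜ) (nhds (((r : ℂ) ^ 2 - 1) / (12 * X ^ 2))) := by
    rw [← hval]
    refine Tendsto.mono_left ?_ nhdsWithin_le_nhds
    exact (hGcont.tendsto X).div
      (tendsto_const_nhds.mul ((hScont.tendsto X).pow 2))
      (mul_ne_zero two_ne_zero (pow_ne_zero _ hSX0))
  have hevS : ∀ᶠ Y in nhdsWithin X {X}ᶜ, Sf r X Y ≠ 0 :=
    ((hScont.continuousAt).eventually_ne hSX0).filter_mono nhdsWithin_le_nhds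
  have hevne : ∀ᶠ Y in nhdsWithin X {X}ᶜ, Y ≠ X := by
    filter_upwards [self_mem_nhdsWithin] with Y hY
    simpa using hY
  refine Filter.Tendsto.congr' ?_ htend
  filter_upwards [hevS, hevne] with Y hSne hne
  have hXY : X - Y ≠ 0 := sub_ne_zero.mpr (Ne.symm hne)
  have hkey := key r hr X Y
  show Gf r X Y / (2 * (Sf r X Y) ^ 2)
      = ((Sf r X Y) ^ 2 - (r : ℂ) ^ 2 * X ^ (r - 1) * Y ^ (r - 1))
        / ((Sf r X Y) ^ 2 * (X - Y) ^ 2)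
  rw [div_eq_div_iff (mul_ne_zero two_ne_zero (pow_ne_zero _ hSne)) (mul_ne_zero (pow_ne_zero _ hSne) (pow_ne_zero _ hXY))]
  linear_combination (-(Sf r X Y) ^ 2) * hkey
end

section
/- Let u, v be nonzero complex numbers with u ≠ v. Define the rational functions x(z) = z + uv/z + u + v and y(z) = 1/2 − u/(2(z+u)) − v/(2(z+v)). Then the sum of residues of the rational differential x(z)·y(z)²·x'(z)·dz at z = −u and z = −v equals (u−v)²/2. -/
open Metric Complex

/-- Points of a closed ball avoid any point farther than the radius from the center. -/
lemma ne_of_mem_closedBall' {c w : ℂ} {ρ : ℝ} (h : ρ < ‖c - w‖) :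
    ∀ z ∈ closedBall c ρ, z ≠ w := by
  intro z hz hzw
  rw [mem_closedBall, dist_eq, hzw] at hz
  have : ‖c - w‖ ≤ ‖w - c‖ := by
    rw [← norm_neg]; simp [neg_sub]
  linarith

/-- Additivity of the circle integral. -/
theorem circleIntegral_add {f g : ℂ → ℂ} {c : ℂ} {R : ℝ} (hf : CircleIntegrable f c R)
    (hg : CircleIntegrable g c R) :
    (∮ z in C(c, R), (f z + g z)) = (∮ z in C(c, R), f z) + ∮ z in C(c, R), g z := by
  simp only [circleIntegral, smul_add, intervalIntegral.integral_add hf.out hg.out]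

/-- The global partial fraction decomposition of `x y² x'` for the extended
Grothendieck's dessins d'enfants spectral curve. -/
lemma decomp_id (u v z : ℂ) (hz0 : z ≠ 0) (hzu : z + u ≠ 0) (hzv : z + v ≠ 0) :
    (z + u * v / z + u + v) * (1 / 2 - u / (2 * (z + u)) - v / (2 * (z + v))) ^ 2
      * (1 - u * v / z ^ 2)
    = (z ^ 4 - (u + v) * z ^ 3 - (u - v) ^ 2 * z ^ 2 + u * v * (u + v) * z - u ^ 2 * v ^ 2)
        / (4 * z ^ 3)
      + (u - v) ^ 2 / 4 * (z + v)⁻¹ + (u - v) ^ 2 / 4 * (z + u)⁻¹ := by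
  have hx : z + u * v / z + u + v = (z + u) * (z + v) / z := by
    field_simp; ring
  have hy : 1 / 2 - u / (2 * (z + u)) - v / (2 * (z + v))
      = (z ^ 2 - u * v) / (2 * ((z + u) * (z + v))) := by
    field_simp; ring
  have hw : 1 - u * v / z ^ 2 = (z ^ 2 - u * v) / z ^ 2 := by
    field_simp
  have h4z : (4 : ℂ) * z ^ 3 ≠ 0 := mul_ne_zero (by norm_num) (pow_ne_zero _ hz0)
  have hden1 : (4 : ℂ) * z ^ 3 * (z + v) ≠ 0 := mul_ne_zero h4z hzv
  have hden2 : (4 : ℂ) * z ^ 3 * (z + v) * (z + u) ≠ 0 := mul_ne_zero hden1 hzu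
  have hL : z * (2 * ((z + u) * (z + v))) ^ 2 * z ^ 2 ≠ 0 :=
    mul_ne_zero (mul_ne_zero hz0 (pow_ne_zero _
      (mul_ne_zero two_ne_zero (mul_ne_zero hzu hzv)))) (pow_ne_zero _ hz0)
  rw [hx, hy, hw, div_pow, div_mul_div_comm, div_mul_div_comm,
    ← div_eq_mul_inv, ← div_eq_mul_inv, div_add_div _ _ h4z hzv,
    div_add_div _ _ hden1 hzu, div_eq_div_iff hL hden2]
  ring

/-- If `f` agrees on the circle with `h + a/(z-c)` where `h` is differentiable on the
closed disk, then the circle integral of `f` is `2πi·a`. -/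
lemma circleIntegral_eq_of_decomp (c a : ℂ) (ρ : ℝ) (hρ : 0 < ρ) (f h : ℂ → ℂ)
    (hd : ∀ z ∈ closedBall c ρ, DifferentiableAt ℂ h z)
    (heq : Set.EqOn f (fun z => h z + a * (z - c)⁻¹) (sphere c ρ)) :
    circleIntegral f c ρ = 2 * Real.pi * Complex.I * a := by
  have hcont : ContinuousOn h (closedBall c ρ) :=
    fun z hz => (hd z hz).continuousAt.continuousWithinAt
  have hInt1 : CircleIntegrable h c ρ :=
    (hcont.mono sphere_subset_closedBall).circleIntegrable hρ.le
  have hInt2 : CircleIntegrable (fun z => a * (z - c)⁻¹) c ρ := by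
    refine ContinuousOn.circleIntegrable hρ.le ?_
    refine continuousOn_const.mul ((continuousOn_id.sub continuousOn_const).inv₀ ?_)
    intro z hz
    simpa [sub_eq_zero] using ne_of_mem_sphere hz hρ.ne'
  rw [circleIntegral.integral_congr hρ.le heq, circleIntegral_add hInt1 hInt2]
  have h0 : circleIntegral h c ρ = 0 :=
    circleIntegral_eq_zero_of_differentiable_on_off_countable hρ.le Set.countable_empty hcont
      (fun z hz => hd z (ball_subset_closedBall hz.1))
  have h1 : circleIntegral (fun z => a * (z - c)⁻¹) c ρ = a * (2 * Real.pi * Complex.I) := by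
    have := circleIntegral.integral_smul a (fun z => (z - c)⁻¹) c ρ
    simp only [smul_eq_mul] at this
    rw [this, circleIntegral.integral_sub_center_inv c hρ.ne']
  rw [h0, h1]; ring

/-- For the extended Grothendieck's dessins d'enfants spectral curve
`x(z) = z + uv/z + u + v`, `y(z) = 1/2 − u/(2(z+u)) − v/(2(z+v))`, the sum of the
residues of `x y² x' dz` at `z = −u` and `z = −v` equals `(u−v)²/2`.  Residues are
expressed via circle integrals around the poles (of small enough radius `ρ`). -/
theorem residues_eGdd_c0 (u v : ℂ) (hu : u ≠ 0) (hv : v ≠ 0) (huv : u ≠ v)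
    (ρ : ℝ) (hρ : 0 < ρ) (h1 : ρ < ‖u‖) (h2 : ρ < ‖v‖)
    (h3 : ρ < ‖u - v‖) :
    circleIntegral
        (fun z : ℂ => (z + u * v / z + u + v) *
          (1 / 2 - u / (2 * (z + u)) - v / (2 * (z + v))) ^ 2 * (1 - u * v / z ^ 2))
        (-u) ρ
      + circleIntegral
        (fun z : ℂ => (z + u * v / z + u + v) *
          (1 / 2 - u / (2 * (z + u)) - v / (2 * (z + v))) ^ 2 * (1 - u * v / z ^ 2))
        (-v) ρ
      = 2 * Real.pi * Complex.I * ((u - v) ^ 2 / 2) := by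
  set g : ℂ → ℂ := fun z =>
      (z ^ 4 - (u + v) * z ^ 3 - (u - v) ^ 2 * z ^ 2 + u * v * (u + v) * z - u ^ 2 * v ^ 2)
        / (4 * z ^ 3) with hg
  have hgdiff : ∀ z : ℂ, z ≠ 0 → DifferentiableAt ℂ g z := by
    intro z hz0
    exact DifferentiableAt.div (by fun_prop) (by fun_prop)
      (mul_ne_zero (by norm_num) (pow_ne_zero _ hz0))
  -- the key single-pole computation
  have key : ∀ w w' : ℂ, (w = u ∧ w' = v) ∨ (w = v ∧ w' = u) →
      ρ < ‖w‖ → ρ < ‖w - w'‖ →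
      circleIntegral
        (fun z : ℂ => (z + u * v / z + u + v) *
          (1 / 2 - u / (2 * (z + u)) - v / (2 * (z + v))) ^ 2 * (1 - u * v / z ^ 2))
        (-w) ρ = 2 * Real.pi * Complex.I * ((u - v) ^ 2 / 4) := by
    intro w w' hcase hw hww'
    have hballw : ρ < ‖-w - 0‖ := by simpa using hw
    have hballw' : ρ < ‖-w - -w'‖ := by
      rw [show (-w : ℂ) - -w' = -(w - w') from by ring, norm_neg]; exact hww'
    refine circleIntegral_eq_of_decomp (-w) ((u - v) ^ 2 / 4) ρ hρ _
      (fun z => g z + (u - v) ^ 2 / 4 * (z + w')⁻¹) ?_ ?_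
    · -- differentiability on the closed ball
      intro z hz
      have hz0 : z ≠ 0 := ne_of_mem_closedBall' hballw z hz
      have hzw' : z ≠ -w' := ne_of_mem_closedBall' hballw' z hz
      have hzw'' : z + w' ≠ 0 := fun h => hzw' (by linear_combination h)
      exact (hgdiff z hz0).add ((differentiableAt_const _).mul
        ((differentiableAt_id.add_const _).inv hzw''))
    · -- the partial fraction identity on the sphere
      intro z hz
      have hz' : z ∈ closedBall (-w) ρ := sphere_subset_closedBall hz
      have hz0 : z ≠ 0 := ne_of_mem_closedBall' hballw z hz'
      have hzw : z + w ≠ 0 := by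
        intro h
        have : z = -w := by linear_combination h
        rw [this] at hz
        simp only [mem_sphere_iff_norm, sub_self, norm_zero] at hz
        exact hρ.ne' hz.symm
      have hzw'' : z + w' ≠ 0 := by
        have hzw' : z ≠ -w' := ne_of_mem_closedBall' hballw' z hz'
        exact fun h => hzw' (by linear_combination h)
      show _ = g z + (u - v) ^ 2 / 4 * (z + w')⁻¹ + (u - v) ^ 2 / 4 * (z - -w)⁻¹
      rw [show z - -w = z + w from by ring, hg]
      rcases hcase with ⟨rfl, rfl⟩ | ⟨rfl, rfl⟩
      · exact decomp_id w w' z hz0 hzw hzw''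
      · linear_combination decomp_id w' w z hz0 hzw'' hzw
  have e1 := key u v (Or.inl ⟨rfl, rfl⟩) h1 h3
  have e2 := key v u (Or.inr ⟨rfl, rfl⟩) h2 (by rwa [← norm_neg, neg_sub])
  rw [e1, e2]; ring
end
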